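/- For every q = 2^m there exists a dictionary D ∈ R^{q² × q²(q+1)}, a union of q+1 orthonormal bases of R^{q²}, with mutual coherence μ(D) = 1/q and spark η(D) = q+1; hence η(D) = 1 + 1/μ(D) = (1 + 1/q)·(1/μ(D)), so both the Donoho–Elad bound and the Gribonval–Nielsen bound are attained with equality. -/

import Mathlib

open Finset

noncomputable section TightDictAux

abbrev GF (m : ℕ) := GaloisField 2 m

noncomputable instance (m : ℕ) : Fintype (GF m) := Fintype.ofFinite _

noncomputable instance (m : ℕ) : DecidableEq (GF m) := Classical.decEq _

variable (m : ℕ)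

noncomputable def trF : GF m → ZMod 2 := Algebra.trace (ZMod 2) (GF m)

noncomputable def chi (x : GF m) : ℝ := if trF m x = 0 then 1 else -1

lemma trF_add (x y : GF m) : trF m (x + y) = trF m x + trF m y := map_add _ x y

lemma chi_zero : chi m 0 = 1 := by simp [chi, trF]

lemma chi_abs (x : GF m) : |chi m x| = 1 := by
  unfold chi; split_ifs <;> norm_num

lemma chi_mul (x y : GF m) : chi m (x + y) = chi m x * chi m y := by
  have hd : ∀ a : ZMod 2, a = 0 ∨ a = 1 := by decide
  unfold chi
  rw [trF_add]
  rcases hd (trF m x) with hx | hx <;> rcases hd (trF m y) with hy | hy <;>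
    rw [hx, hy] <;> norm_num <;> decide

/-- Frobenius as an algebra equivalence over `ZMod 2`. -/
noncomputable def frobAlg : GF m ≃ₐ[ZMod 2] GF m :=
  AlgEquiv.ofRingEquiv (f := frobeniusEquiv (GF m) 2) (fun c => by
    show frobenius (GF m) 2 _ = _
    rw [frobenius_def, ← map_pow, ZMod.pow_card])

lemma trF_sq (x : GF m) : trF m (x ^ 2) = trF m x := by
  have := Algebra.trace_eq_of_algEquiv (frobAlg m) x
  simpa [trF, frobAlg, AlgEquiv.ofRingEquiv, frobenius_def] using this

lemma chi_sq (x : GF m) : chi m (x ^ 2) = chi m x := by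
  unfold chi; rw [trF_sq]

lemma card_GF (hm : m ≠ 0) : Fintype.card (GF m) = 2 ^ m := by
  rw [← Nat.card_eq_fintype_card]; exact GaloisField.card 2 m hm

lemma trF_nondeg {a : GF m} (ha : a ≠ 0) : ∃ y : GF m, trF m (a * y) = 1 := by
  have hnd := traceForm_nondegenerate (ZMod 2) (GF m)
  by_contra hc
  push_neg at hc
  have h0 : ∀ y : GF m, trF m (a * y) = 0 := by
    intro y
    have hd : ∀ z : ZMod 2, z = 0 ∨ z = 1 := by decide
    rcases hd (trF m (a * y)) with h | h
    · exact h
    · exact absurd h (hc y)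
  exact ha (hnd.1 a (fun y => by simpa [Algebra.traceForm_apply, trF] using h0 y))

lemma exists_theta : ∃ θ : GF m, trF m θ = 1 := by
  obtain ⟨y, hy⟩ := trF_nondeg m (one_ne_zero (α := GF m))
  exact ⟨1 * y, hy⟩

lemma sum_chi (hm : m ≠ 0) (c : GF m) :
    ∑ x : GF m, chi m (c * x) = if c = 0 then (2 ^ m : ℝ) else 0 := by
  by_cases hc : c = 0
  · simp [hc, chi_zero, card_GF m hm]
  · rw [if_neg hc]
    obtain ⟨y, hy⟩ := trF_nondeg m hc
    have hrw : ∑ x : GF m, chi m (c * x) = ∑ x : GF m, chi m (c * (x + y)) :=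
      (Fintype.sum_equiv (Equiv.addRight y) _ _ (fun x => rfl)).symm
    have hcy : chi m (c * y) = -1 := by
      unfold chi; rw [hy]; norm_num
    have : ∑ x : GF m, chi m (c * (x + y))
        = -∑ x : GF m, chi m (c * x) := by
      rw [← Finset.sum_neg_distrib]
      refine Finset.sum_congr rfl (fun x _ => ?_)
      rw [mul_add, chi_mul, hcy]; ring
    linarith [hrw.trans this]

lemma sq_surj : Function.Surjective (fun x : GF m => x ^ 2) := by
  apply Finite.surjective_of_injective
  intro x y h
  simp only at h
  have h0 : (x + y) ^ 2 = 0 := by rw [CharTwo.add_sq, h, CharTwo.add_self_eq_zero]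
  have h1 : x + y = 0 := by
    exact pow_eq_zero_iff (n := 2) (by norm_num) |>.mp h0
  simpa using CharTwo.add_eq_iff_eq_add.mp h1

lemma sum_chi_pair (hm : m ≠ 0) (u1 u2 : GF m) :
    ∑ v : GF m × GF m, chi m (u1 * v.1 + u2 * v.2)
      = (if u1 = 0 then (2 ^ m : ℝ) else 0) * (if u2 = 0 then (2 ^ m : ℝ) else 0) := by
  rw [Fintype.sum_prod_type]
  have h1 : ∀ v1 : GF m, ∑ v2 : GF m, chi m (u1 * v1 + u2 * v2)
      = chi m (u1 * v1) * ∑ v2 : GF m, chi m (u2 * v2) := by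
    intro v1
    rw [Finset.mul_sum]
    exact sum_congr rfl fun v2 _ => chi_mul m _ _
  calc ∑ v1 : GF m, ∑ v2 : GF m, chi m (u1 * v1 + u2 * v2)
      = ∑ v1 : GF m, chi m (u1 * v1) * ∑ v2 : GF m, chi m (u2 * v2) :=
        sum_congr rfl fun v1 _ => h1 v1
    _ = (∑ v1 : GF m, chi m (u1 * v1)) * ∑ v2 : GF m, chi m (u2 * v2) := by
        rw [Finset.sum_mul]
    _ = _ := by rw [sum_chi m hm, sum_chi m hm]

lemma sum_chi_quad (hm : m ≠ 0) {γ : GF m} (hγ : γ ≠ 0) (u1 u2 : GF m) :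
    ∑ v : GF m × GF m, chi m (γ * (v.1 * v.2) + (u1 * v.1 + u2 * v.2))
      = chi m (u1 * (γ⁻¹ * u2)) * (2 ^ m : ℝ) := by
  rw [Fintype.sum_prod_type]
  have h1 : ∀ v1 : GF m, ∑ v2 : GF m, chi m (γ * (v1 * v2) + (u1 * v1 + u2 * v2))
      = chi m (u1 * v1) * (if γ * v1 + u2 = 0 then (2 ^ m : ℝ) else 0) := by
    intro v1
    rw [← sum_chi m hm, Finset.mul_sum]
    refine sum_congr rfl fun v2 _ => ?_
    rw [← chi_mul]
    congr 1
    ring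
  calc ∑ v1 : GF m, ∑ v2 : GF m, chi m (γ * (v1 * v2) + (u1 * v1 + u2 * v2))
      = ∑ v1 : GF m, chi m (u1 * v1) * (if γ * v1 + u2 = 0 then (2 ^ m : ℝ) else 0) :=
        sum_congr rfl fun v1 _ => h1 v1
    _ = chi m (u1 * (γ⁻¹ * u2)) * (2 ^ m : ℝ) := by
        rw [Finset.sum_eq_single (γ⁻¹ * u2)]
        · rw [if_pos]
          rw [mul_inv_cancel_left₀ hγ, CharTwo.add_self_eq_zero]
        · intro v1 _ hv1
          rw [if_neg, mul_zero]
          intro h0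
          apply hv1
          have h2 : γ * v1 = u2 := by simpa using CharTwo.add_eq_iff_eq_add.mp h0
          rw [← h2]
          field_simp
        · intro h; exact absurd (mem_univ _) h

lemma sum_chi_main (hm : m ≠ 0) {θ : GF m} (hθ : trF m θ = 1) (v1 v2 : GF m) :
    ∑ a : GF m, chi m (a ^ 2 * (v1 * v2) + (θ * a * v1 + a * v2))
      = if v1 = 0 ∧ v2 = 0 then (2 ^ m : ℝ) else 0 := by
  obtain ⟨s, hs⟩ := sq_surj m (v1 * v2)
  simp only at hs
  have key : ∀ a : GF m, chi m (a ^ 2 * (v1 * v2) + (θ * a * v1 + a * v2))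
      = chi m ((s + θ * v1 + v2) * a) := by
    intro a
    have h1 : a ^ 2 * (v1 * v2) = (a * s) ^ 2 := by rw [← hs]; ring
    rw [h1, chi_mul, chi_sq, ← chi_mul]
    congr 1
    ring
  rw [sum_congr rfl (fun a _ => key a), sum_chi m hm]
  by_cases h : v1 = 0 ∧ v2 = 0
  · obtain ⟨h1, h2⟩ := h
    subst h1; subst h2
    have hs0 : s = 0 := by
      have : s ^ 2 = 0 := by simpa using hs
      exact pow_eq_zero_iff (n := 2) (by norm_num) |>.mp this
    simp [hs0]
  · rw [if_neg h, if_neg]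
    intro h0
    have hsum : s = θ * v1 + v2 := by
      have h2 : s + (θ * v1 + v2) = 0 := by rw [← add_assoc]; exact h0
      simpa using CharTwo.add_eq_iff_eq_add.mp h2
    have hsq : v1 * v2 = θ ^ 2 * v1 ^ 2 + v2 ^ 2 := by
      rw [← hs, hsum, CharTwo.add_sq, mul_pow]
    by_cases hv1 : v1 = 0
    · subst hv1
      apply h
      refine ⟨rfl, ?_⟩
      have : v2 ^ 2 = 0 := by linear_combination -hsq
      exact pow_eq_zero_iff (n := 2) (by norm_num) |>.mp this
    · set t := v2 * v1⁻¹ with ht_def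
      have hv2 : v2 = t * v1 := (inv_mul_cancel_right₀ hv1 v2).symm
      have hmain : t * v1 ^ 2 = (θ ^ 2 + t ^ 2) * v1 ^ 2 := by
        rw [hv2] at hsq
        linear_combination hsq
      have ht : t = θ ^ 2 + t ^ 2 := mul_right_cancel₀ (pow_ne_zero 2 hv1) hmain
      have htr : trF m t = trF m θ + trF m t := by
        conv_lhs => rw [ht]
        rw [trF_add, trF_sq, trF_sq]
      have hzero : trF m θ = 0 := right_eq_add.mp htr
      rw [hθ] at hzero
      exact one_ne_zero hzero
lemma chi_mul_arrange (q : ℝ) (s t u : GF m) (h : s + t = u) :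
    (q⁻¹ * chi m s) * (q⁻¹ * chi m t) = q⁻¹ * q⁻¹ * chi m u := by
  rw [← h, chi_mul]; ring

end TightDictAux


/-- For every `q = 2^m` there is a dictionary `D ∈ R^{q² × q²(q+1)}`, a union of
`q+1` orthonormal bases of `R^{q²}`, with mutual coherence `μ(D) = 1/q` and spark
`η(D) = q+1`; hence `η(D) = 1 + 1/μ(D) = (1 + 1/q)/μ(D)`, attaining both the
Donoho–Elad and the Gribonval–Nielsen bounds. -/
theorem tight_dictionary_exists (m : ℕ) (hm : 0 < m) :
    ∃ D : Fin ((2 ^ m) ^ 2) → (Fin (2 ^ m + 1) × Fin ((2 ^ m) ^ 2)) → ℝ,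
      -- union of q+1 orthonormal bases
      (∀ b : Fin (2 ^ m + 1), ∀ c c' : Fin ((2 ^ m) ^ 2),
        (∑ r, D r (b, c) * D r (b, c')) = if c = c' then 1 else 0) ∧
      -- mutual coherence μ(D) = 1/q
      (∀ p p' : Fin (2 ^ m + 1) × Fin ((2 ^ m) ^ 2), p ≠ p' →
        |∑ r, D r p * D r p'| ≤ 1 / (2 ^ m : ℝ)) ∧
      (∃ p p' : Fin (2 ^ m + 1) × Fin ((2 ^ m) ^ 2), p ≠ p' ∧
        |∑ r, D r p * D r p'| = 1 / (2 ^ m : ℝ)) ∧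
      -- spark η(D) = q + 1
      (∃ x : (Fin (2 ^ m + 1) × Fin ((2 ^ m) ^ 2)) → ℝ, x ≠ 0 ∧
        (∀ r, ∑ c, D r c * x c = 0) ∧
        (Finset.univ.filter fun c => x c ≠ 0).card = 2 ^ m + 1) ∧
      (∀ x : (Fin (2 ^ m + 1) × Fin ((2 ^ m) ^ 2)) → ℝ, x ≠ 0 →
        (∀ r, ∑ c, D r c * x c = 0) →
        2 ^ m + 1 ≤ (Finset.univ.filter fun c => x c ≠ 0).card) := by
  classical
  have hm' : m ≠ 0 := hm.ne'
  have hq0 : (0:ℝ) < (2 ^ m : ℝ) := by positivity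
  have hqne : (2 ^ m : ℝ) ≠ 0 := ne_of_gt hq0
  have hpow : 0 < 2 ^ m := Nat.pow_pos (n := m) (by norm_num)
  have hcard : Fintype.card (GF m) = 2 ^ m := card_GF m hm'
  have hcard2 : Fintype.card (GF m × GF m) = (2 ^ m) ^ 2 := by
    rw [Fintype.card_prod, hcard, sq]
  let eC : Fin ((2 ^ m) ^ 2) ≃ GF m × GF m := (Fintype.equivFinOfCardEq hcard2).symm
  let eQ : Fin (2 ^ m) ≃ GF m := (Fintype.equivFinOfCardEq hcard).symm
  let af : Fin (2 ^ m + 1) → GF m := fun b => eQ ⟨b.val - 1, by have := b.isLt; omega⟩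
  obtain ⟨θ, hθ⟩ := exists_theta m
  set D : Fin ((2 ^ m) ^ 2) → (Fin (2 ^ m + 1) × Fin ((2 ^ m) ^ 2)) → ℝ := fun r pc =>
    if pc.1 = 0 then (if r = pc.2 then 1 else 0)
    else (2 ^ m : ℝ)⁻¹ * chi m ((af pc.1) ^ 2 * ((eC r).1 * (eC r).2)
      + ((eC pc.2).1 * (eC r).1 + (eC pc.2).2 * (eC r).2)) with hD
  have hD0 : ∀ r c, D r (0, c) = if r = c then (1:ℝ) else 0 := fun r c => by simp [hD]
  have hDb : ∀ r (b : Fin (2 ^ m + 1)) c, b ≠ 0 → D r (b, c)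
      = (2 ^ m : ℝ)⁻¹ * chi m ((af b) ^ 2 * ((eC r).1 * (eC r).2)
        + ((eC c).1 * (eC r).1 + (eC c).2 * (eC r).2)) := fun r b c hb => by simp [hD, hb]
  have haf : ∀ b b' : Fin (2 ^ m + 1), b ≠ 0 → b' ≠ 0 → b ≠ b' → af b ≠ af b' := by
    intro b b' hb hb' hbb heq
    have hb0 : b.val ≠ 0 := fun h => hb (Fin.ext (by simpa using h))
    have hb0' : b'.val ≠ 0 := fun h => hb' (Fin.ext (by simpa using h))
    apply hbb
    have h1 := eQ.injective heq
    have hv : b.val - 1 = b'.val - 1 := congrArg Fin.val h1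
    exact Fin.ext (by omega)
  -- orthonormality
  have hOrtho : ∀ b (c c' : Fin ((2 ^ m) ^ 2)),
      (∑ r, D r (b, c) * D r (b, c')) = if c = c' then 1 else 0 := by
    intro b c c'
    by_cases hb : b = 0
    · subst hb
      have hterm : ∀ r, D r (0, c) * D r (0, c')
          = if r = c then (if r = c' then (1:ℝ) else 0) else 0 := by
        intro r; rw [hD0, hD0]; split_ifs <;> ring
      rw [Finset.sum_congr rfl fun r _ => hterm r, Finset.sum_ite_eq' Finset.univ c _]
      simp only [Finset.mem_univ, if_true]
    · have hterm : ∀ r, D r (b, c) * D r (b, c')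
          = (2 ^ m : ℝ)⁻¹ * (2 ^ m : ℝ)⁻¹
            * chi m (((eC c).1 + (eC c').1) * (eC r).1 + ((eC c).2 + (eC c').2) * (eC r).2) := by
        intro r
        rw [hDb r b c hb, hDb r b c' hb]
        have harg : ((af b) ^ 2 * ((eC r).1 * (eC r).2)
              + ((eC c).1 * (eC r).1 + (eC c).2 * (eC r).2))
            + ((af b) ^ 2 * ((eC r).1 * (eC r).2)
              + ((eC c').1 * (eC r).1 + (eC c').2 * (eC r).2))
            = ((eC c).1 + (eC c').1) * (eC r).1 + ((eC c).2 + (eC c').2) * (eC r).2 := by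
          rw [show ∀ X A B : GF m, (X + A) + (X + B) = (X + X) + (A + B) from fun X A B => by ring,
            CharTwo.add_self_eq_zero, zero_add]
          ring
        exact chi_mul_arrange m _ _ _ _ harg
      rw [Finset.sum_congr rfl fun r _ => hterm r, ← Finset.mul_sum]
      have htrans : (∑ r, chi m (((eC c).1 + (eC c').1) * (eC r).1
            + ((eC c).2 + (eC c').2) * (eC r).2))
          = ∑ v : GF m × GF m, chi m (((eC c).1 + (eC c').1) * v.1
            + ((eC c).2 + (eC c').2) * v.2) :=
        Fintype.sum_equiv eC _ _ (fun r => rfl)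
      rw [htrans, sum_chi_pair m hm']
      by_cases hcc : c = c'
      · subst hcc
        rw [if_pos rfl, if_pos (CharTwo.add_self_eq_zero _), if_pos (CharTwo.add_self_eq_zero _)]
        field_simp
      · rw [if_neg hcc]
        have hne : eC c ≠ eC c' := fun h => hcc (eC.injective h)
        have : (eC c).1 + (eC c').1 ≠ 0 ∨ (eC c).2 + (eC c').2 ≠ 0 := by
          by_contra hcon
          push_neg at hcon
          obtain ⟨h1, h2⟩ := hcon
          exact hne (Prod.ext (by simpa using CharTwo.add_eq_iff_eq_add.mp h1)
            (by simpa using CharTwo.add_eq_iff_eq_add.mp h2))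
        rcases this with h | h
        · rw [if_neg h]; ring
        · rw [if_neg h]; ring
  -- mixed inner products
  have hmix : ∀ (c : Fin ((2 ^ m) ^ 2)) (b : Fin (2 ^ m + 1)) (c' : Fin ((2 ^ m) ^ 2)),
      (∑ r, D r (0, c) * D r (b, c')) = D c (b, c') := by
    intro c b c'
    have hterm : ∀ r, D r (0, c) * D r (b, c') = if r = c then D r (b, c') else 0 := by
      intro r; rw [hD0]; split_ifs with h
      · subst h; ring
      · ring
    rw [Finset.sum_congr rfl fun r _ => hterm r, Finset.sum_ite_eq' Finset.univ c _]
    simp only [Finset.mem_univ, if_true]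
  have habsD : ∀ r (b : Fin (2 ^ m + 1)) c, b ≠ 0 → |D r (b, c)| = (2 ^ m : ℝ)⁻¹ := by
    intro r b c hb
    rw [hDb r b c hb, abs_mul, chi_abs, mul_one, abs_of_pos (by positivity)]
  have hbent : ∀ (b : Fin (2 ^ m + 1)) c (b' : Fin (2 ^ m + 1)) c', b ≠ 0 → b' ≠ 0 → b ≠ b' →
      |∑ r, D r (b, c) * D r (b', c')| = (2 ^ m : ℝ)⁻¹ := by
    intro b c b' c' hb hb' hbb
    have ha : af b + af b' ≠ 0 := fun h =>
      haf b b' hb hb' hbb (by simpa using CharTwo.add_eq_iff_eq_add.mp h)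
    have hγ : (af b) ^ 2 + (af b') ^ 2 ≠ 0 := by
      rw [← CharTwo.add_sq]; exact pow_ne_zero 2 ha
    have hterm : ∀ r, D r (b, c) * D r (b', c')
        = (2 ^ m : ℝ)⁻¹ * (2 ^ m : ℝ)⁻¹
          * chi m (((af b) ^ 2 + (af b') ^ 2) * ((eC r).1 * (eC r).2)
            + (((eC c).1 + (eC c').1) * (eC r).1 + ((eC c).2 + (eC c').2) * (eC r).2)) := by
      intro r
      rw [hDb r b c hb, hDb r b' c' hb']
      exact chi_mul_arrange m _ _ _ _ (by ring)
    rw [Finset.sum_congr rfl fun r _ => hterm r, ← Finset.mul_sum]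
    have htrans : (∑ r, chi m (((af b) ^ 2 + (af b') ^ 2) * ((eC r).1 * (eC r).2)
          + (((eC c).1 + (eC c').1) * (eC r).1 + ((eC c).2 + (eC c').2) * (eC r).2)))
        = ∑ v : GF m × GF m, chi m (((af b) ^ 2 + (af b') ^ 2) * (v.1 * v.2)
          + (((eC c).1 + (eC c').1) * v.1 + ((eC c).2 + (eC c').2) * v.2)) :=
      Fintype.sum_equiv eC _ _ (fun r => rfl)
    rw [htrans, sum_chi_quad m hm' hγ]
    have h2 : |(2 ^ m : ℝ)| = 2 ^ m := abs_of_pos hq0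
    rw [abs_mul, abs_mul, abs_mul, chi_abs, abs_inv, h2]
    field_simp
  -- coherence bound
  have hCoh : ∀ p p' : Fin (2 ^ m + 1) × Fin ((2 ^ m) ^ 2), p ≠ p' →
      |∑ r, D r p * D r p'| ≤ 1 / (2 ^ m : ℝ) := by
    intro p p' hne
    obtain ⟨b, c⟩ := p
    obtain ⟨b', c'⟩ := p'
    rw [one_div]
    by_cases hbb : b = b'
    · subst hbb
      have hcc : c ≠ c' := by
        intro h; exact hne (by rw [h])
      rw [hOrtho b c c', if_neg hcc, abs_zero]
      positivity
    · by_cases hb : b = 0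
      · subst hb
        have hb' : b' ≠ 0 := fun h => hbb (h ▸ rfl)
        rw [hmix c b' c', habsD c b' c' hb']
      · by_cases hb' : b' = 0
        · subst hb'
          have hflip : (∑ r, D r (b, c) * D r (0, c')) = ∑ r, D r (0, c') * D r (b, c) :=
            Finset.sum_congr rfl fun r _ => mul_comm _ _
          rw [hflip, hmix c' b c, habsD c' b c hb]
        · rw [hbent b c b' c' hb hb' hbb]
  -- equality witness
  set c0 : Fin ((2 ^ m) ^ 2) := eC.symm (0, 0) with hc0
  have hone : (1 : Fin (2 ^ m + 1)) ≠ 0 := by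
    intro h
    have hv := congrArg Fin.val h
    rw [Fin.val_one', Nat.mod_eq_of_lt (by omega)] at hv
    simp at hv
  have hEq : ∃ p p' : Fin (2 ^ m + 1) × Fin ((2 ^ m) ^ 2), p ≠ p' ∧
      |∑ r, D r p * D r p'| = 1 / (2 ^ m : ℝ) := by
    refine ⟨(0, c0), (1, c0), ?_, ?_⟩
    · intro h
      exact hone (congrArg Prod.fst h).symm
    · rw [hmix c0 1 c0, one_div, hDb c0 1 c0 hone]
      rw [show eC c0 = ((0 : GF m), (0 : GF m)) from eC.apply_symm_apply _]
      norm_num [chi_zero]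
  -- spark witness
  set W : Fin (2 ^ m + 1) → Fin ((2 ^ m) ^ 2) := fun b => eC.symm (θ * af b, af b) with hW
  set x : (Fin (2 ^ m + 1) × Fin ((2 ^ m) ^ 2)) → ℝ := fun pc =>
    if pc.1 = 0 then (if pc.2 = c0 then 1 else 0)
    else (if pc.2 = W pc.1 then -1 else 0) with hx
  have hxne : x ≠ 0 := by
    intro h
    have := congrFun h (0, c0)
    simp [hx] at this
  have hker : ∀ r, ∑ cc, D r cc * x cc = 0 := by
    intro r
    rw [Fintype.sum_prod_type]
    have hinner : ∀ b : Fin (2 ^ m + 1), (∑ c : Fin ((2 ^ m) ^ 2), D r (b, c) * x (b, c))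
        = if b = 0 then (if r = c0 then (1:ℝ) else 0) else -D r (b, W b) := by
      intro b
      by_cases hb : b = 0
      · subst hb
        rw [if_pos rfl]
        have hterm : ∀ c, D r (0, c) * x (0, c)
            = if c = c0 then (if r = c then (1:ℝ) else 0) else 0 := by
          intro c
          rw [hD0]
          simp only [hx]
          split_ifs <;> ring
        rw [Finset.sum_congr rfl fun c _ => hterm c, Finset.sum_ite_eq' Finset.univ c0 _]
        simp only [Finset.mem_univ, if_true]
      · rw [if_neg hb]
        have hterm : ∀ c, D r (b, c) * x (b, c) = if c = W b then -D r (b, c) else 0 := by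
          intro c
          simp only [hx, if_neg hb]
          split_ifs <;> ring
        rw [Finset.sum_congr rfl fun c _ => hterm c, Finset.sum_ite_eq' Finset.univ (W b) _]
        simp only [Finset.mem_univ, if_true]
    rw [Finset.sum_congr rfl fun b _ => hinner b, Fin.sum_univ_succ, if_pos rfl]
    have hsucc : ∀ i : Fin (2 ^ m),
        (if (i.succ : Fin (2 ^ m + 1)) = 0 then (if r = c0 then (1:ℝ) else 0)
          else -D r (i.succ, W i.succ)) = -D r (i.succ, W i.succ) :=
      fun i => if_neg (Fin.succ_ne_zero i)
    have hafs : ∀ i : Fin (2 ^ m), af i.succ = eQ i := fun i => rfl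
    have hDval : ∀ i : Fin (2 ^ m), D r (i.succ, W i.succ) = (2 ^ m : ℝ)⁻¹ *
        chi m ((eQ i) ^ 2 * ((eC r).1 * (eC r).2)
          + (θ * eQ i * (eC r).1 + eQ i * (eC r).2)) := by
      intro i
      rw [hDb r i.succ (W i.succ) (Fin.succ_ne_zero i)]
      rw [show eC (W i.succ) = (θ * af i.succ, af i.succ) from eC.apply_symm_apply _, hafs i]
    have hsum2 : (∑ i : Fin (2 ^ m),
        (if (i.succ : Fin (2 ^ m + 1)) = 0 then (if r = c0 then (1:ℝ) else 0)
          else -D r (i.succ, W i.succ)))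
        = -((2 ^ m : ℝ)⁻¹ * ∑ a : GF m, chi m (a ^ 2 * ((eC r).1 * (eC r).2)
            + (θ * a * (eC r).1 + a * (eC r).2))) := by
      rw [Finset.sum_congr rfl fun i _ => (hsucc i).trans (congrArg Neg.neg (hDval i))]
      rw [Finset.sum_neg_distrib, ← Finset.mul_sum]
      rw [show (∑ i : Fin (2 ^ m), chi m ((eQ i) ^ 2 * ((eC r).1 * (eC r).2)
            + (θ * eQ i * (eC r).1 + eQ i * (eC r).2)))
          = ∑ a : GF m, chi m (a ^ 2 * ((eC r).1 * (eC r).2)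
            + (θ * a * (eC r).1 + a * (eC r).2)) from
        Fintype.sum_equiv eQ _ _ (fun i => rfl)]
    rw [hsum2, sum_chi_main m hm' hθ]
    by_cases hr : r = c0
    · rw [if_pos hr]
      have : eC r = ((0 : GF m), (0 : GF m)) := by rw [hr, hc0, eC.apply_symm_apply]
      rw [if_pos ⟨by rw [this], by rw [this]⟩]
      field_simp
      ring
    · rw [if_neg hr, if_neg]
      · ring
      · rintro ⟨h1, h2⟩
        apply hr
        have : eC r = ((0 : GF m), (0 : GF m)) := Prod.ext h1 h2
        rw [hc0, ← this, eC.symm_apply_apply]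
  have hcardx : (Finset.univ.filter fun cc => x cc ≠ 0).card = 2 ^ m + 1 := by
    have hset : (Finset.univ.filter fun cc => x cc ≠ 0)
        = insert ((0 : Fin (2 ^ m + 1)), c0)
          ((Finset.univ.filter fun b : Fin (2 ^ m + 1) => b ≠ 0).image fun b => (b, W b)) := by
      ext ⟨b, c⟩
      simp only [Finset.mem_filter, Finset.mem_univ, true_and, Finset.mem_insert,
        Finset.mem_image]
      constructor
      · intro h
        by_cases hb : b = 0
        · subst hb
          left
          have hcc : c = c0 := by
            by_contra hc
            exact h (by simp [hx, hc])
          rw [hcc]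
        · right
          refine ⟨b, hb, ?_⟩
          have hcc : c = W b := by
            by_contra hc
            exact h (by simp [hx, hb, hc])
          rw [hcc]
      · intro h
        rcases h with h | ⟨b', hb', heq⟩
        · injection h with h1 h2
          subst h1; subst h2
          simp [hx]
        · have hbne : b' ≠ 0 := hb'
          injection heq with h1 h2
          subst h1; subst h2
          simp [hx, hbne]
    rw [hset, Finset.card_insert_of_notMem, Finset.card_image_of_injective _
      (fun b b' h => (Prod.mk.injEq _ _ _ _).mp h |>.1)]
    · rw [Finset.filter_ne', Finset.card_erase_of_mem (Finset.mem_univ _)]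
      simp [Fintype.card_fin]
    · intro hmem
      obtain ⟨b', hb', heq⟩ := Finset.mem_image.mp hmem
      exact (Finset.mem_filter.mp hb').2 ((Prod.mk.injEq _ _ _ _).mp heq).1
  -- spark lower bound
  have hLower : ∀ y : (Fin (2 ^ m + 1) × Fin ((2 ^ m) ^ 2)) → ℝ, y ≠ 0 →
      (∀ r, ∑ c, D r c * y c = 0) →
      2 ^ m + 1 ≤ (Finset.univ.filter fun c => y c ≠ 0).card := by
    intro y hy hker'
    set s := Finset.univ.filter fun cc => y cc ≠ 0 with hs
    have hsne : s.Nonempty := by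
      obtain ⟨p, hp⟩ := Function.ne_iff.mp hy
      exact ⟨p, Finset.mem_filter.mpr ⟨Finset.mem_univ _, hp⟩⟩
    obtain ⟨p0, hp0s, hp0max⟩ := Finset.exists_max_image s (fun cc => |y cc|) hsne
    have hp0ne : y p0 ≠ 0 := (Finset.mem_filter.mp hp0s).2
    have hp0pos : 0 < |y p0| := abs_pos.mpr hp0ne
    -- Gram identity
    have hgram : ∑ cc, (∑ r, D r p0 * D r cc) * y cc = 0 := by
      calc ∑ cc, (∑ r, D r p0 * D r cc) * y cc
          = ∑ cc, ∑ r, D r p0 * D r cc * y cc :=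
            Finset.sum_congr rfl fun cc _ => Finset.sum_mul _ _ _
        _ = ∑ r, ∑ cc, D r p0 * D r cc * y cc := Finset.sum_comm
        _ = ∑ r, D r p0 * ∑ cc, D r cc * y cc := Finset.sum_congr rfl fun r _ => by
            rw [Finset.mul_sum]
            exact Finset.sum_congr rfl fun cc _ => by ring
        _ = 0 := by simp [hker']
    have hGpp : (∑ r, D r p0 * D r p0) = 1 := by
      have h := hOrtho p0.1 p0.2 p0.2
      simpa using h
    have hy0 : y p0 = -∑ cc ∈ Finset.univ.erase p0, (∑ r, D r p0 * D r cc) * y cc := by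
      have h := Finset.add_sum_erase Finset.univ
        (fun cc => (∑ r, D r p0 * D r cc) * y cc) (Finset.mem_univ p0)
      beta_reduce at h
      rw [hgram, hGpp, one_mul] at h
      linarith [h]
    have hbound : |y p0| ≤ (2 ^ m : ℝ)⁻¹ * ((s.erase p0).card * |y p0|) := by
      calc |y p0| = |∑ cc ∈ Finset.univ.erase p0, (∑ r, D r p0 * D r cc) * y cc| := by
            rw [hy0, abs_neg]
        _ ≤ ∑ cc ∈ Finset.univ.erase p0, |(∑ r, D r p0 * D r cc) * y cc| :=
            Finset.abs_sum_le_sum_abs _ _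
        _ ≤ ∑ cc ∈ Finset.univ.erase p0, (2 ^ m : ℝ)⁻¹ * |y cc| := by
            refine Finset.sum_le_sum fun cc hcc => ?_
            rw [abs_mul]
            refine mul_le_mul_of_nonneg_right ?_ (abs_nonneg _)
            have hne' : p0 ≠ cc := (Finset.ne_of_mem_erase hcc).symm
            have := hCoh p0 cc hne'
            rwa [one_div] at this
        _ = (2 ^ m : ℝ)⁻¹ * ∑ cc ∈ Finset.univ.erase p0, |y cc| := by
            rw [Finset.mul_sum]
        _ = (2 ^ m : ℝ)⁻¹ * ∑ cc ∈ s.erase p0, |y cc| := by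
            congr 1
            refine (Finset.sum_subset ?_ ?_).symm
            · exact Finset.erase_subset_erase p0 (Finset.subset_univ s)
            · intro cc hcc1 hcc2
              have hccne : cc ≠ p0 := Finset.ne_of_mem_erase hcc1
              have : cc ∉ s := fun hin => hcc2 (Finset.mem_erase.mpr ⟨hccne, hin⟩)
              have hyz : y cc = 0 := by
                by_contra hyy
                exact this (Finset.mem_filter.mpr ⟨Finset.mem_univ _, hyy⟩)
              rw [hyz, abs_zero]
        _ ≤ (2 ^ m : ℝ)⁻¹ * ((s.erase p0).card * |y p0|) := by
            refine mul_le_mul_of_nonneg_left ?_ (by positivity)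
            have h := Finset.sum_le_card_nsmul (s.erase p0) (fun cc => |y cc|) |y p0|
              (fun cc hcc => hp0max cc (Finset.mem_of_mem_erase hcc))
            rwa [nsmul_eq_mul] at h
    have hreal : (2 ^ m : ℝ) ≤ ((s.erase p0).card : ℝ) := by
      have h3 := mul_le_mul_of_nonneg_left hbound (le_of_lt hq0)
      rw [← mul_assoc, mul_inv_cancel₀ hqne, one_mul] at h3
      have h4 : (2 ^ m : ℝ) * |y p0| ≤ ((s.erase p0).card : ℝ) * |y p0| := h3
      exact le_of_mul_le_mul_right h4 hp0pos
    have hnat : 2 ^ m ≤ (s.erase p0).card := by exact_mod_cast hreal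
    have hcerase : (s.erase p0).card = s.card - 1 := Finset.card_erase_of_mem hp0s
    have hspos : 1 ≤ s.card := Finset.card_pos.mpr hsne
    omega
  exact ⟨D, hOrtho, hCoh, hEq, ⟨x, hxne, hker, hcardx⟩, hLower⟩
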